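/- For every n ≥ 1, the ℂ-linear span of the set of vectors {ψ ⊗ (star∘ψ) : ψ : Fin n → ℂ with |ψ ℓ| = 1 for all ℓ} in ℂ^{Fin n × Fin n} has dimension n² − n + 1 (i.e. its finrank over ℂ equals n² − (n−1)). -/

import Mathlib

open Matrix Complex

/-- The tensor (product) vector `x ⊗ y` in `ℂ^{n²}`. -/
noncomputable def tensorVec (n : ℕ) (x y : Fin n → ℂ) : Fin n × Fin n → ℂ :=
  fun p => x p.1 * y p.2

/-!
Every `ψ ⊗ ψ̄` with unimodular `ψ` has all diagonal entries equal to `1`, so the span lies in the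
space of vectors with constant diagonal, of dimension `n² - (n - 1)`. Conversely, the span contains
`1 = 1 ⊗ 1` and is closed under entrywise products, since `(ψ ⊗ ψ̄) (φ ⊗ φ̄) = ψφ ⊗ conj (ψφ)`.
Replacing the `k`-th entry of `1` by a phase `c` gives `A + c R_k + c̄ C_k`, where `R_k` and `C_k`
are the off-diagonal parts of row and column `k`; averaging over the fourth roots of unity extracts
`R_k` and `C_k`, and for `k ≠ m` the entrywise product `R_k C_m` is the matrix unit at `(k, m)`.
-/

open ComplexConjugate Pointwise Submodule

theorem Submodule.mul_mem_span_of_mul_subset {R A : Type*} [CommSemiring R] [Semiring A]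
    [Algebra R A] {S : Set A} (hS : S * S ⊆ S) {x y : A} (hx : x ∈ span R S)
    (hy : y ∈ span R S) : x * y ∈ span R S :=
  span_mono hS (span_mul_span R S S ▸ mul_mem_mul hx hy)

section PhaseAveraging

variable {E : Type*} [AddCommGroup E] [Module ℂ E] {V : Submodule ℂ E} {a r s : E}

theorem mem_of_forall_add_smul_add_conj_smul_mem_left
    (h : ∀ c : ℂ, ‖c‖ = 1 → a + c • r + conj c • s ∈ V) : r ∈ V := by
  set f : ℂ → E := fun c => a + c • r + conj c • s
  have hr : r = (4 : ℂ)⁻¹ • (f 1 - f (-1) - I • f I + I • f (-I)) := by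
    simp only [f, map_one, map_neg, conj_I, neg_neg, smul_add, smul_smul, mul_neg, I_mul_I]
    module
  rw [hr]
  refine V.smul_mem _ (V.add_mem (V.sub_mem (V.sub_mem ?_ ?_) (V.smul_mem _ ?_)) (V.smul_mem _ ?_))
    <;> apply h <;> simp

theorem mem_of_forall_add_smul_add_conj_smul_mem_right
    (h : ∀ c : ℂ, ‖c‖ = 1 → a + c • r + conj c • s ∈ V) : s ∈ V :=
  mem_of_forall_add_smul_add_conj_smul_mem_left fun c hc => by
    simpa only [conj_conj, add_right_comm] using h (conj c) (by rwa [Complex.norm_conj])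

end PhaseAveraging

def phaseVectors (n : ℕ) : Set (Fin n × Fin n → ℂ) :=
  {v | ∃ ψ : Fin n → ℂ, (∀ ℓ, ‖ψ ℓ‖ = 1) ∧ v = tensorVec n ψ (star ∘ ψ)}

theorem one_mem_phaseVectors (n : ℕ) : 1 ∈ phaseVectors n :=
  ⟨1, fun _ => norm_one, funext fun _ => by simp [tensorVec]⟩

theorem phaseVectors_mul_subset (n : ℕ) : phaseVectors n * phaseVectors n ⊆ phaseVectors n := by
  rintro _ ⟨_, ⟨ψ, hψ, rfl⟩, _, ⟨φ, hφ, rfl⟩, rfl⟩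
  refine ⟨ψ * φ, fun ℓ => by simp [hψ, hφ], ?_⟩
  funext p
  simp only [tensorVec, Pi.mul_apply, Function.comp_apply, star_mul']
  ring

theorem tensorVec_diag {n : ℕ} {ψ : Fin n → ℂ} (hψ : ∀ ℓ, ‖ψ ℓ‖ = 1) (k : Fin n) :
    tensorVec n ψ (star ∘ ψ) (k, k) = 1 := by
  simp [tensorVec, mul_conj', hψ]

def offDiagRow (n : ℕ) (k : Fin n) : Fin n × Fin n → ℂ :=
  fun p => if p.1 = k ∧ p.2 ≠ k then 1 else 0

def offDiagCol (n : ℕ) (k : Fin n) : Fin n × Fin n → ℂ :=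
  fun p => if p.2 = k ∧ p.1 ≠ k then 1 else 0

theorem tensorVec_update_one {n : ℕ} (k : Fin n) {c : ℂ} (hc : ‖c‖ = 1) :
    tensorVec n (Function.update 1 k c) (star ∘ Function.update 1 k c) =
      (1 - offDiagRow n k - offDiagCol n k) + c • offDiagRow n k + conj c • offDiagCol n k := by
  funext ⟨p, q⟩
  by_cases hp : p = k <;> by_cases hq : q = k <;>
    simp [tensorVec, offDiagRow, offDiagCol, hp, hq, mul_conj', hc]

theorem tensorVec_update_one_mem_phaseVectors {n : ℕ} (k : Fin n) {c : ℂ} (hc : ‖c‖ = 1) :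
    tensorVec n (Function.update 1 k c) (star ∘ Function.update 1 k c) ∈ phaseVectors n := by
  refine ⟨_, fun ℓ => ?_, rfl⟩
  by_cases hℓ : ℓ = k <;> simp [hℓ, hc]

theorem offDiagRow_mem_span_phaseVectors {n : ℕ} (k : Fin n) :
    offDiagRow n k ∈ span ℂ (phaseVectors n) :=
  mem_of_forall_add_smul_add_conj_smul_mem_left fun _ hc =>
    tensorVec_update_one k hc ▸ subset_span (tensorVec_update_one_mem_phaseVectors k hc)

theorem offDiagCol_mem_span_phaseVectors {n : ℕ} (k : Fin n) :
    offDiagCol n k ∈ span ℂ (phaseVectors n) :=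
  mem_of_forall_add_smul_add_conj_smul_mem_right fun _ hc =>
    tensorVec_update_one k hc ▸ subset_span (tensorVec_update_one_mem_phaseVectors k hc)

theorem single_eq_offDiagRow_mul_offDiagCol {n : ℕ} {k m : Fin n} (hkm : k ≠ m) :
    Pi.single (k, m) 1 = offDiagRow n k * offDiagCol n m := by
  funext ⟨p, q⟩
  by_cases hp : p = k <;> by_cases hq : q = m <;>
    simp [offDiagRow, offDiagCol, hp, hq, hkm, hkm.symm]

theorem single_mem_span_phaseVectors {n : ℕ} {k m : Fin n} (hkm : k ≠ m) (z : ℂ) :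
    Pi.single (k, m) z ∈ span ℂ (phaseVectors n) := by
  rw [← mul_one z, ← smul_eq_mul, Pi.single_smul', single_eq_offDiagRow_mul_offDiagCol hkm]
  exact smul_mem _ _ (mul_mem_span_of_mul_subset (phaseVectors_mul_subset n)
    (offDiagRow_mem_span_phaseVectors k) (offDiagCol_mem_span_phaseVectors m))

section DiagonalDeviation

variable (R : Type*) {ι : Type*} [CommRing R]

def diagDeviation (d : ι) : (ι × ι → R) →ₗ[R] ({k // k ≠ d} → R) :=
  LinearMap.pi fun k => LinearMap.proj (R := R) (φ := fun _ : ι × ι => R) (k.1, k.1) -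
    LinearMap.proj (d, d)

variable {R}

@[simp]
theorem diagDeviation_apply (d : ι) (v : ι × ι → R) (k : {k // k ≠ d}) :
    diagDeviation R d v k = v (k.1, k.1) - v (d, d) :=
  rfl

theorem diagDeviation_surjective [DecidableEq ι] (d : ι) :
    Function.Surjective (diagDeviation R d) := fun u =>
  ⟨fun p => if h : p.1 = d then 0 else u ⟨p.1, h⟩, funext fun k => by simp [k.2]⟩

theorem mem_ker_diagDeviation_iff {d : ι} {v : ι × ι → R} :
    v ∈ LinearMap.ker (diagDeviation R d) ↔ ∀ k, v (k, k) = v (d, d) := by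
  refine ⟨fun hv k => ?_, fun hv => funext fun k => by simp [hv]⟩
  by_cases hk : k = d
  · rw [hk]
  · simpa [sub_eq_zero] using congrFun hv ⟨k, hk⟩

theorem finrank_ker_diagDeviation (K : Type*) [Field K] [Fintype ι] [DecidableEq ι] (d : ι) :
    Module.finrank K (LinearMap.ker (diagDeviation K d)) =
      Fintype.card ι ^ 2 - (Fintype.card ι - 1) := by
  have h := LinearMap.finrank_range_add_finrank_ker (diagDeviation K d)
  rw [LinearMap.range_eq_top.2 (diagDeviation_surjective d), finrank_top,
    Module.finrank_fintype_fun_eq_card, Module.finrank_fintype_fun_eq_card,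
    Fintype.card_subtype_compl, Fintype.card_subtype_eq, Fintype.card_prod] at h
  rw [sq]
  omega

end DiagonalDeviation

theorem span_phaseVectors_eq_ker_diagDeviation {n : ℕ} (d : Fin n) :
    span ℂ (phaseVectors n) = LinearMap.ker (diagDeviation ℂ d) := by
  refine le_antisymm (span_le.2 ?_) fun v hv => ?_
  · rintro _ ⟨ψ, hψ, rfl⟩
    exact mem_ker_diagDeviation_iff.2 fun k => by rw [tensorVec_diag hψ, tensorVec_diag hψ]
  have hdiag := mem_ker_diagDeviation_iff.1 hv
  set u := v - v (d, d) • 1 with hu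
  rw [show v = v (d, d) • 1 + u by rw [hu, add_sub_cancel], ← Finset.univ_sum_single u]
  refine add_mem (smul_mem _ _ (subset_span (one_mem_phaseVectors n))) (sum_mem fun p _ => ?_)
  by_cases hp : p.1 = p.2
  · obtain ⟨k, m⟩ := p
    dsimp only at hp
    subst hp
    simp [hu, hdiag]
  · exact single_mem_span_phaseVectors hp _

theorem span_phase_vectors_dim (n : ℕ) (hn : 1 ≤ n) :
    Module.finrank ℂ
      (Submodule.span ℂ {v : Fin n × Fin n → ℂ |
        ∃ ψ : Fin n → ℂ, (∀ ℓ, ‖ψ ℓ‖ = 1) ∧ v = tensorVec n ψ (star ∘ ψ)})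
      = n ^ 2 - (n - 1) := by
  change Module.finrank ℂ (span ℂ (phaseVectors n)) = _
  rw [span_phaseVectors_eq_ker_diagDeviation ⟨0, hn⟩, finrank_ker_diagDeviation, Fintype.card_fin]
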